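/- arXiv:2012.00247 — 4 statements merged into one kernel-verified Lean document; each statement's English description precedes it below -/
import Mathlib

section
/- Under the abstract Green identity setting, the trace operator T : D ⊂ H₊ → 𝔥 × 𝔥 is closable, where H₊ = dom(A*) is equipped with the graph norm of A*. That is, if uₙ → 0 in the graph norm of A* and (Γ₀uₙ, Γ₁uₙ) → (f, g) in 𝔥 × 𝔥, then f = g = 0. -/
/-!
Passing to the limit in the Green identity against a fixed `v ∈ D` kills the left-hand side,
so the limit `(f, g)` is orthogonal, for the boundary form `⟪p.2, q.1⟫ - ⟪p.1, q.2⟫`, to the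
dense range of `T`, hence to all of `𝔥 × 𝔥`. This form is nondegenerate, so `(f, g) = 0`.
-/

open scoped InnerProductSpace Topology
open Filter

section BoundaryForm

variable {𝕜 E : Type*} [RCLike 𝕜] [NormedAddCommGroup E] [InnerProductSpace 𝕜 E]

def boundaryForm (p q : E × E) : 𝕜 := ⟪p.2, q.1⟫_𝕜 - ⟪p.1, q.2⟫_𝕜

theorem continuous_boundaryForm :
    Continuous fun pq : (E × E) × (E × E) => (boundaryForm pq.1 pq.2 : 𝕜) := by
  unfold boundaryForm
  fun_prop

theorem eq_zero_of_forall_boundaryForm_eq_zero {p : E × E}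
    (h : ∀ q, (boundaryForm p q : 𝕜) = 0) : p = 0 := by
  have h₂ : p.2 = 0 := by simpa [boundaryForm] using h (p.2, 0)
  have h₁ : p.1 = 0 := by simpa [boundaryForm] using h (0, p.1)
  exact Prod.ext h₁ h₂

theorem eq_zero_of_boundaryForm_eq_zero_on_denseRange {ι : Type*} {T : ι → E × E}
    (hT : DenseRange T) {p : E × E} (h : ∀ i, (boundaryForm p (T i) : 𝕜) = 0) : p = 0 :=
  eq_zero_of_forall_boundaryForm_eq_zero (𝕜 := 𝕜) fun q =>
    hT.induction_on q
      (isClosed_eq (continuous_boundaryForm.comp (Continuous.prodMk_right p)) continuous_const) h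

end BoundaryForm

theorem trace_operator_closable_general
    {H 𝔥 : Type*}
    [NormedAddCommGroup H] [InnerProductSpace ℂ H] [CompleteSpace H]
    [NormedAddCommGroup 𝔥] [InnerProductSpace ℂ 𝔥]
    (A : H →ₗ.[ℂ] H)
    (D : Submodule ℂ H)
    (hDsub : D ≤ A.adjoint.domain)
    (T : D →ₗ[ℂ] 𝔥 × 𝔥)
    (hTdense : DenseRange T)
    (hGreen : ∀ u v : D,
      ⟪A.adjoint ⟨(u : H), hDsub u.2⟩, (v : H)⟫_ℂ
          - ⟪(u : H), A.adjoint ⟨(v : H), hDsub v.2⟩⟫_ℂ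
        = ⟪(T u).2, (T v).1⟫_ℂ - ⟪(T u).1, (T v).2⟫_ℂ)
    (u : ℕ → D) (f g : 𝔥)
    (hu0 : Tendsto (fun n => ((u n : H))) atTop (nhds 0))
    (hAu0 : Tendsto (fun n => A.adjoint ⟨((u n : H)), hDsub (u n).2⟩) atTop (nhds 0))
    (hT : Tendsto (fun n => T (u n)) atTop (nhds (f, g))) :
    f = 0 ∧ g = 0 := by
  have horth : ∀ v : D, (boundaryForm (f, g) (T v) : ℂ) = 0 := fun v => by
    have hlim : Tendsto (fun n => (boundaryForm (T (u n)) (T v) : ℂ)) atTop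
        (𝓝 (boundaryForm (f, g) (T v))) :=
      (continuous_boundaryForm.tendsto _).comp (hT.prodMk_nhds tendsto_const_nhds)
    have hzero : Tendsto (fun n => (boundaryForm (T (u n)) (T v) : ℂ)) atTop (𝓝 0) := by
      refine Tendsto.congr (fun n => hGreen (u n) v) ?_
      simpa using
        (hAu0.inner (𝕜 := ℂ) tendsto_const_nhds).sub (hu0.inner (𝕜 := ℂ) tendsto_const_nhds)
    exact tendsto_nhds_unique hlim hzero
  simpa using eq_zero_of_boundaryForm_eq_zero_on_denseRange hTdense horth

/-- In the abstract Green identity setting, the trace operator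
`T : D ⊆ H₊ → 𝔥 × 𝔥` is closable, where `H₊ = dom A*` carries the graph norm of `A*`:
if `uₙ → 0` in the graph norm of `A*` (i.e. `uₙ → 0` and `A* uₙ → 0` in `H`) and
`(Γ₀ uₙ, Γ₁ uₙ) → (f, g)` in `𝔥 × 𝔥`, then `f = 0` and `g = 0`. -/
theorem trace_operator_closable
    {H 𝔥 : Type*}
    [NormedAddCommGroup H] [InnerProductSpace ℂ H] [CompleteSpace H]
    [NormedAddCommGroup 𝔥] [InnerProductSpace ℂ 𝔥] [CompleteSpace 𝔥]
    (A : H →ₗ.[ℂ] H)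
    (hdense : Dense (A.domain : Set H))
    (hclosed : A.IsClosed)
    (hsym : ∀ u v : A.domain, ⟪A u, (v : H)⟫_ℂ = ⟪(u : H), A v⟫_ℂ)
    (D : Submodule ℂ H)
    (hDsub : D ≤ A.adjoint.domain)
    (hAD : A.domain ≤ D)
    (T : D →ₗ[ℂ] 𝔥 × 𝔥)
    (hTdense : DenseRange T)
    (hGreen : ∀ u v : D,
      ⟪A.adjoint ⟨(u : H), hDsub u.2⟩, (v : H)⟫_ℂ
          - ⟪(u : H), A.adjoint ⟨(v : H), hDsub v.2⟩⟫_ℂ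
        = ⟪(T u).2, (T v).1⟫_ℂ - ⟪(T u).1, (T v).2⟫_ℂ)
    (u : ℕ → D) (f g : 𝔥)
    (hu0 : Tendsto (fun n => ((u n : H))) atTop (nhds 0))
    (hAu0 : Tendsto (fun n => A.adjoint ⟨((u n : H)), hDsub (u n).2⟩) atTop (nhds 0))
    (hT : Tendsto (fun n => T (u n)) atTop (nhds (f, g))) :
    f = 0 ∧ g = 0 :=
  trace_operator_closable_general A D hDsub T hTdense hGreen u f g hu0 hAu0 hT
end

section
/- Let t ↦ Q_t be a family of orthogonal projections on 𝔥 × 𝔥 differentiable at t₀, with each ran(Q_t) Lagrangian with respect to ω(f,g) = ⟨Jf, g⟩, J(f₁,f₂) = (f₂,−f₁). Then for every vector q ∈ ran(Q_{t₀}), the quantity ω(Q̇_{t₀} q, q) is real; indeed ω(q, Q̇_{t₀} q) equals its own complex conjugate. -/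
/-!
Differentiating `Q_t* = Q_t` and `J Q_t + Q_t J = J` at `t₀` shows that `Q̇ := Q̇_{t₀}` is
self-adjoint and anticommutes with `J`. Since `J` is skew-adjoint,
`conj ⟪J q, Q̇ q⟫ = ⟪Q̇ q, J q⟫ = ⟪q, Q̇ J q⟫ = -⟪q, J Q̇ q⟫ = ⟪J q, Q̇ q⟫`.
-/

open scoped InnerProductSpace
open ContinuousLinearMap

/-- The operator `J(f₁,f₂) = (f₂, −f₁)` on `𝔥 ×₂ 𝔥`. -/
noncomputable def Jsymp (𝔥 : Type*)
    [NormedAddCommGroup 𝔥] [InnerProductSpace ℂ 𝔥] [CompleteSpace 𝔥] :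
    WithLp 2 (𝔥 × 𝔥) →L[ℂ] WithLp 2 (𝔥 × 𝔥) :=
  ((WithLp.prodContinuousLinearEquiv 2 ℂ 𝔥 𝔥).symm.toContinuousLinearMap) ∘L
    (((ContinuousLinearMap.snd ℂ 𝔥 𝔥).prod (-(ContinuousLinearMap.fst ℂ 𝔥 𝔥))) ∘L
      (WithLp.prodContinuousLinearEquiv 2 ℂ 𝔥 𝔥).toContinuousLinearMap)

lemma inner_Jsymp_left {𝔥 : Type*}
    [NormedAddCommGroup 𝔥] [InnerProductSpace ℂ 𝔥] [CompleteSpace 𝔥]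
    (f g : WithLp 2 (𝔥 × 𝔥)) :
    ⟪Jsymp 𝔥 f, g⟫_ℂ = -⟪f, Jsymp 𝔥 g⟫_ℂ := by
  simp only [Jsymp, coe_comp, Function.comp_apply, ContinuousLinearEquiv.coe_coe,
    WithLp.prodContinuousLinearEquiv_apply, WithLp.prodContinuousLinearEquiv_symm_apply,
    prod_apply, coe_snd', neg_apply, coe_fst', WithLp.prod_inner_apply, WithLp.ofLp_fst,
    WithLp.ofLp_snd, inner_neg_left, inner_neg_right]
  ring

theorem HasDerivAt.isSelfAdjoint {𝕜 F : Type*} [NontriviallyNormedField 𝕜] [StarRing 𝕜]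
    [TrivialStar 𝕜] [NormedAddCommGroup F] [NormedSpace 𝕜 F] [StarAddMonoid F]
    [StarModule 𝕜 F] [ContinuousStar F] {Q : 𝕜 → F} {Q' : F} {t₀ : 𝕜}
    (hQ : ∀ t, IsSelfAdjoint (Q t)) (h : HasDerivAt Q Q' t₀) : IsSelfAdjoint Q' := by
  have hstar : HasDerivAt Q (star Q') t₀ := by
    simpa only [(hQ _).star_eq] using h.star
  exact hstar.unique h

theorem HasDerivAt.mul_add_mul_eq_zero {𝕜 𝔸 : Type*} [NontriviallyNormedField 𝕜] [NormedRing 𝔸]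
    [NormedAlgebra 𝕜 𝔸] {Q : 𝕜 → 𝔸} {Q' : 𝔸} {t₀ : 𝕜} {J C : 𝔸}
    (hQ : ∀ t, J * Q t + Q t * J = C) (h : HasDerivAt Q Q' t₀) : J * Q' + Q' * J = 0 := by
  have hconst : HasDerivAt (fun t => J * Q t + Q t * J) 0 t₀ := by
    simpa only [hQ] using hasDerivAt_const t₀ C
  exact ((h.const_mul J).add (h.mul_const J)).unique hconst

theorem conj_inner_eq_of_anticommute_of_isSelfAdjoint {𝕜 E : Type*} [RCLike 𝕜]
    [NormedAddCommGroup E] [InnerProductSpace 𝕜 E] [CompleteSpace E] {J A : E →L[𝕜] E}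
    (hJ : ∀ x y, ⟪J x, y⟫_𝕜 = -⟪x, J y⟫_𝕜) (hA : IsSelfAdjoint A) (hJA : J * A + A * J = 0)
    (q : E) : (starRingEnd 𝕜) ⟪J q, A q⟫_𝕜 = ⟪J q, A q⟫_𝕜 := by
  have hAJ : A (J q) = -J (A q) := by
    rw [eq_neg_iff_add_eq_zero, add_comm]
    exact congr($hJA q)
  calc (starRingEnd 𝕜) ⟪J q, A q⟫_𝕜 = ⟪A q, J q⟫_𝕜 := inner_conj_symm _ _
    _ = ⟪q, A (J q)⟫_𝕜 := hA.isSymmetric _ _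
    _ = -⟪q, J (A q)⟫_𝕜 := by rw [hAJ, inner_neg_right]
    _ = ⟪J q, A q⟫_𝕜 := (hJ _ _).symm

theorem omega_derivative_projection_real_general
    {𝔥 : Type*} [NormedAddCommGroup 𝔥] [InnerProductSpace ℂ 𝔥] [CompleteSpace 𝔥]
    (Q : ℝ → (WithLp 2 (𝔥 × 𝔥) →L[ℂ] WithLp 2 (𝔥 × 𝔥)))
    (Q' : WithLp 2 (𝔥 × 𝔥) →L[ℂ] WithLp 2 (𝔥 × 𝔥))
    (t₀ : ℝ)
    (hsa : ∀ t, IsSelfAdjoint (Q t))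
    (hJQ : ∀ t, Jsymp 𝔥 ∘L Q t + Q t ∘L Jsymp 𝔥 = Jsymp 𝔥)
    (hderiv : HasDerivAt Q Q' t₀) :
    ∀ q : WithLp 2 (𝔥 × 𝔥), Q t₀ q = q →
      (starRingEnd ℂ) ⟪Jsymp 𝔥 q, Q' q⟫_ℂ = ⟪Jsymp 𝔥 q, Q' q⟫_ℂ ∧
        (starRingEnd ℂ) ⟪Jsymp 𝔥 (Q' q), q⟫_ℂ = ⟪Jsymp 𝔥 (Q' q), q⟫_ℂ := by
  intro q _
  have hreal := conj_inner_eq_of_anticommute_of_isSelfAdjoint inner_Jsymp_left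
    (hderiv.isSelfAdjoint hsa) (hderiv.mul_add_mul_eq_zero hJQ) q
  refine ⟨hreal, ?_⟩
  rw [inner_Jsymp_left, ← inner_conj_symm, hreal, map_neg, hreal]

/-- Let `t ↦ Q_t` be a family of orthogonal projections on `𝔥 × 𝔥`,
differentiable at `t₀`, with each `ran Q_t` Lagrangian for `ω(f,g) = ⟨Jf, g⟩`,
`J(f₁,f₂) = (f₂,−f₁)`.  Then for every `q ∈ ran Q_{t₀}` the quantity
`ω(q, Q̇_{t₀} q) = ⟨J q, Q̇_{t₀} q⟩` is real, i.e. it equals its own complex conjugate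
(and hence `ω(Q̇_{t₀} q, q)` is real as well). -/
theorem omega_derivative_projection_real
    {𝔥 : Type*} [NormedAddCommGroup 𝔥] [InnerProductSpace ℂ 𝔥] [CompleteSpace 𝔥]
    (Q : ℝ → (WithLp 2 (𝔥 × 𝔥) →L[ℂ] WithLp 2 (𝔥 × 𝔥)))
    (Q' : WithLp 2 (𝔥 × 𝔥) →L[ℂ] WithLp 2 (𝔥 × 𝔥))
    (t₀ : ℝ)
    (hsa : ∀ t, IsSelfAdjoint (Q t))
    (hidem : ∀ t, IsIdempotentElem (Q t))
    (hLagRange : ∀ t, ∀ p : WithLp 2 (𝔥 × 𝔥),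
      p ∈ LinearMap.range (Q t : WithLp 2 (𝔥 × 𝔥) →ₗ[ℂ] WithLp 2 (𝔥 × 𝔥)) ↔
        ∀ q ∈ LinearMap.range (Q t : WithLp 2 (𝔥 × 𝔥) →ₗ[ℂ] WithLp 2 (𝔥 × 𝔥)), ⟪Jsymp 𝔥 p, q⟫_ℂ = 0)
    (hJQ : ∀ t, Jsymp 𝔥 ∘L Q t + Q t ∘L Jsymp 𝔥 = Jsymp 𝔥)
    (hderiv : HasDerivAt Q Q' t₀) :
    ∀ q : WithLp 2 (𝔥 × 𝔥), Q t₀ q = q →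
      (starRingEnd ℂ) ⟪Jsymp 𝔥 q, Q' q⟫_ℂ = ⟪Jsymp 𝔥 q, Q' q⟫_ℂ ∧
        (starRingEnd ℂ) ⟪Jsymp 𝔥 (Q' q), q⟫_ℂ = ⟪Jsymp 𝔥 (Q' q), q⟫_ℂ :=
  omega_derivative_projection_real_general Q Q' t₀ hsa hJQ hderiv
end

section
/- Krein-type resolvent formula: let A be a densely defined closed symmetric operator in H with trace map T = (Γ₀, Γ₁) on D ⊆ dom(A*) satisfying the abstract Green identity and having dense range, and let A₁, A₂ be self-adjoint extensions of A with domains contained in D. Then for every ζ ∉ Spec(A₁) ∪ Spec(A₂), writing Rⱼ(ζ) = (Aⱼ − ζ)⁻¹, one has R₂(ζ) − R₁(ζ) = (T R₂(ζ̄))* J (T R₁(ζ)), where T Rⱼ(ζ̄) ∈ B(H, 𝔥 × 𝔥) and J(f₁,f₂) = (f₂, −f₁). -/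
/-!
Self-adjoint extensions of `A` lie inside `A*`, so the Green identity applies to
`u = R₁(ζ) f` and `v = R₂(ζ̄) g`. Substituting `A₁ u = f + ζ u` and `A₂ v = g + ζ̄ v`, the
`ζ`-terms cancel and the identity becomes `⟪f, R₂(ζ̄) g⟫ - ⟪R₁(ζ) f, g⟫ = ⟪J T u, T v⟫`.
Since `R₂(ζ̄) = R₂(ζ)*` by the symmetry of `A₂`, the left side is `⟪(R₂(ζ) - R₁(ζ)) f, g⟫`.
-/

open scoped InnerProductSpace ComplexConjugate
open ContinuousLinearMap

section ResolventAlgebra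

variable {𝕜 E : Type*} [RCLike 𝕜] [NormedAddCommGroup E] [InnerProductSpace 𝕜 E]

theorem inner_sub_inner_eq_of_sub_smul_eq {a b u v f g : E} {ζ : 𝕜}
    (ha : a - ζ • u = f) (hb : b - conj ζ • v = g) :
    ⟪a, v⟫_𝕜 - ⟪u, b⟫_𝕜 = ⟪f, v⟫_𝕜 - ⟪u, g⟫_𝕜 := by
  rw [← ha, ← hb, inner_sub_left, inner_sub_right, inner_smul_left, inner_smul_right]
  ring

theorem LinearPMap.IsFormalAdjoint.inner_eq_of_sub_smul_eq {B : E →ₗ.[𝕜] E}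
    (hB : B.IsFormalAdjoint B) {u v : B.domain} {f g : E} {ζ : 𝕜}
    (hu : B u - ζ • (u : E) = f) (hv : B v - conj ζ • (v : E) = g) :
    ⟪(u : E), g⟫_𝕜 = ⟪f, (v : E)⟫_𝕜 := by
  have h := inner_sub_inner_eq_of_sub_smul_eq hu hv
  rw [hB u v, sub_self] at h
  exact (sub_eq_zero.mp h.symm).symm

variable [CompleteSpace E]

theorem IsSelfAdjoint.isFormalAdjoint_self {B : E →ₗ.[𝕜] E} (hB : IsSelfAdjoint B) :
    B.IsFormalAdjoint B := by
  have h := LinearPMap.adjoint_isFormalAdjoint hB.dense_domain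
  rwa [LinearPMap.isSelfAdjoint_def.mp hB] at h

theorem LinearPMap.le_adjoint_of_le_of_isSelfAdjoint {A B : E →ₗ.[𝕜] E}
    (hA : Dense (A.domain : Set E)) (hAB : A ≤ B) (hB : IsSelfAdjoint B) : B ≤ A.adjoint :=
  IsFormalAdjoint.le_adjoint hA fun x y => by
    rw [hAB.2 (x := x) (y := ⟨x, hAB.1 x.2⟩) rfl]
    exact hB.isFormalAdjoint_self _ y

end ResolventAlgebra

section BoundaryTriple

variable {H 𝔥 : Type*} [NormedAddCommGroup H] [InnerProductSpace ℂ H] [CompleteSpace H]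
  [NormedAddCommGroup 𝔥] [InnerProductSpace ℂ 𝔥] [CompleteSpace 𝔥]

theorem Jsymp_inner (x y : WithLp 2 (𝔥 × 𝔥)) :
    ⟪Jsymp 𝔥 x, y⟫_ℂ = ⟪x.snd, y.fst⟫_ℂ - ⟪x.fst, y.snd⟫_ℂ := by
  simp [Jsymp, WithLp.prod_inner_apply, sub_eq_add_neg]

theorem green_identity_of_le_adjoint {A : H →ₗ.[ℂ] H} {D : Submodule ℂ H}
    (hDsub : D ≤ A.adjoint.domain) {T : D →ₗ[ℂ] WithLp 2 (𝔥 × 𝔥)}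
    (hGreen : ∀ u v : D,
      ⟪A.adjoint ⟨(u : H), hDsub u.2⟩, (v : H)⟫_ℂ
          - ⟪(u : H), A.adjoint ⟨(v : H), hDsub v.2⟩⟫_ℂ
        = ⟪(T u).snd, (T v).fst⟫_ℂ - ⟪(T u).fst, (T v).snd⟫_ℂ)
    {B₁ B₂ : H →ₗ.[ℂ] H} (hB₁ : B₁ ≤ A.adjoint) (hB₂ : B₂ ≤ A.adjoint)
    (hdom₁ : B₁.domain ≤ D) (hdom₂ : B₂.domain ≤ D) (u : B₁.domain) (v : B₂.domain) :
    ⟪B₁ u, (v : H)⟫_ℂ - ⟪(u : H), B₂ v⟫_ℂ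
      = ⟪Jsymp 𝔥 (T ⟨u, hdom₁ u.2⟩), T ⟨v, hdom₂ v.2⟩⟫_ℂ := by
  rw [Jsymp_inner, ← hGreen, hB₁.2 (y := ⟨u, hDsub (hdom₁ u.2)⟩) rfl,
    hB₂.2 (y := ⟨v, hDsub (hdom₂ v.2)⟩) rfl]

end BoundaryTriple

theorem symplectic_krein_formula_general
    {H 𝔥 : Type*}
    [NormedAddCommGroup H] [InnerProductSpace ℂ H] [CompleteSpace H]
    [NormedAddCommGroup 𝔥] [InnerProductSpace ℂ 𝔥] [CompleteSpace 𝔥]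
    (A : H →ₗ.[ℂ] H)
    (hdense : Dense (A.domain : Set H))
    (D : Submodule ℂ H)
    (hDsub : D ≤ A.adjoint.domain)
    (T : D →ₗ[ℂ] WithLp 2 (𝔥 × 𝔥))
    (hGreen : ∀ u v : D,
      ⟪A.adjoint ⟨(u : H), hDsub u.2⟩, (v : H)⟫_ℂ
          - ⟪(u : H), A.adjoint ⟨(v : H), hDsub v.2⟩⟫_ℂ
        = ⟪(T u).snd, (T v).fst⟫_ℂ - ⟪(T u).fst, (T v).snd⟫_ℂ)
    -- `A₁`, `A₂`: self-adjoint extensions of `A` with domains contained in `D`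
    (A₁ A₂ : H →ₗ.[ℂ] H)
    (hA₁ : A ≤ A₁) (hsa₁ : A₁.adjoint = A₁) (hdom₁ : A₁.domain ≤ D)
    (hA₂ : A ≤ A₂) (hsa₂ : A₂.adjoint = A₂) (hdom₂ : A₂.domain ≤ D)
    -- `ζ ∉ Spec A₁ ∪ Spec A₂`: bounded two-sided resolvents exist
    (ζ : ℂ) (R₁ R₂ R₂' : H →L[ℂ] H)
    (hm₁ : ∀ f : H, R₁ f ∈ A₁.domain)
    (hr₁ : ∀ f : H, A₁ ⟨R₁ f, hm₁ f⟩ - ζ • R₁ f = f)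
    (hm₂ : ∀ f : H, R₂ f ∈ A₂.domain)
    (hr₂ : ∀ f : H, A₂ ⟨R₂ f, hm₂ f⟩ - ζ • R₂ f = f)
    (hm₂' : ∀ f : H, R₂' f ∈ A₂.domain)
    (hr₂c : ∀ f : H, A₂ ⟨R₂' f, hm₂' f⟩ - (starRingEnd ℂ ζ) • R₂' f = f)
    -- the bounded trace–resolvent compositions `T R₁(ζ)` and `T R₂(ζ̄)`
    (TR₁ TR₂' : H →L[ℂ] WithLp 2 (𝔥 × 𝔥))
    (hTR₁ : ∀ f : H, TR₁ f = T ⟨R₁ f, hdom₁ (hm₁ f)⟩)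
    (hTR₂' : ∀ f : H, TR₂' f = T ⟨R₂' f, hdom₂ (hm₂' f)⟩) :
    R₂ - R₁ = (ContinuousLinearMap.adjoint TR₂') ∘L (Jsymp 𝔥 ∘L TR₁) := by
  have hle₁ := LinearPMap.le_adjoint_of_le_of_isSelfAdjoint hdense hA₁ hsa₁
  have hle₂ := LinearPMap.le_adjoint_of_le_of_isSelfAdjoint hdense hA₂ hsa₂
  refine ContinuousLinearMap.ext fun f => ext_inner_right ℂ fun g => ?_
  -- `R₂(ζ̄)` is the adjoint of `R₂(ζ)`
  have hR₂ : ⟪R₂ f, g⟫_ℂ = ⟪f, R₂' g⟫_ℂ :=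
    IsSelfAdjoint.isFormalAdjoint_self hsa₂ |>.inner_eq_of_sub_smul_eq
      (u := ⟨R₂ f, hm₂ f⟩) (v := ⟨R₂' g, hm₂' g⟩) (hr₂ f) (hr₂c g)
  calc ⟪(R₂ - R₁) f, g⟫_ℂ
      = ⟪f, R₂' g⟫_ℂ - ⟪R₁ f, g⟫_ℂ := by rw [sub_apply, inner_sub_left, hR₂]
    _ = ⟪A₁ ⟨R₁ f, hm₁ f⟩, R₂' g⟫_ℂ - ⟪R₁ f, A₂ ⟨R₂' g, hm₂' g⟩⟫_ℂ :=
      (inner_sub_inner_eq_of_sub_smul_eq (hr₁ f) (hr₂c g)).symm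
    _ = ⟪Jsymp 𝔥 (TR₁ f), TR₂' g⟫_ℂ := by
      rw [hTR₁, hTR₂']
      exact green_identity_of_le_adjoint hDsub hGreen hle₁ hle₂ hdom₁ hdom₂ _ ⟨R₂' g, hm₂' g⟩
    _ = ⟪((adjoint TR₂') ∘L (Jsymp 𝔥 ∘L TR₁)) f, g⟫_ℂ := by
      rw [comp_apply, comp_apply, adjoint_inner_left]

/-- **symplectic Krein-type resolvent formula.**
Let `A` be a densely defined closed symmetric operator in `H` with trace map
`T = (Γ₀, Γ₁)` on `D ⊆ dom A*` satisfying the abstract Green identity and having dense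
range, and let `A₁, A₂` be self-adjoint extensions of `A` with domains contained in `D`.
Then for every `ζ ∉ Spec A₁ ∪ Spec A₂`, writing `Rⱼ(ζ) = (Aⱼ − ζ)⁻¹`, one has
`R₂(ζ) − R₁(ζ) = (T R₂(ζ̄))* J (T R₁(ζ))` where `T Rⱼ ∈ B(H, 𝔥 × 𝔥)` and
`J(f₁,f₂) = (f₂,−f₁)`. -/
theorem symplectic_krein_formula
    {H 𝔥 : Type*}
    [NormedAddCommGroup H] [InnerProductSpace ℂ H] [CompleteSpace H]
    [NormedAddCommGroup 𝔥] [InnerProductSpace ℂ 𝔥] [CompleteSpace 𝔥]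
    (A : H →ₗ.[ℂ] H)
    (hdense : Dense (A.domain : Set H))
    (hclosed : A.IsClosed)
    (hsym : ∀ u v : A.domain, ⟪A u, (v : H)⟫_ℂ = ⟪(u : H), A v⟫_ℂ)
    (D : Submodule ℂ H)
    (hDsub : D ≤ A.adjoint.domain)
    (hAD : A.domain ≤ D)
    (T : D →ₗ[ℂ] WithLp 2 (𝔥 × 𝔥))
    (hTdense : DenseRange T)
    (hGreen : ∀ u v : D,
      ⟪A.adjoint ⟨(u : H), hDsub u.2⟩, (v : H)⟫_ℂ
          - ⟪(u : H), A.adjoint ⟨(v : H), hDsub v.2⟩⟫_ℂ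
        = ⟪(T u).snd, (T v).fst⟫_ℂ - ⟪(T u).fst, (T v).snd⟫_ℂ)
    -- `A₁`, `A₂`: self-adjoint extensions of `A` with domains contained in `D`
    (A₁ A₂ : H →ₗ.[ℂ] H)
    (hA₁ : A ≤ A₁) (hsa₁ : A₁.adjoint = A₁) (hdom₁ : A₁.domain ≤ D)
    (hA₂ : A ≤ A₂) (hsa₂ : A₂.adjoint = A₂) (hdom₂ : A₂.domain ≤ D)
    -- `ζ ∉ Spec A₁ ∪ Spec A₂`: bounded two-sided resolvents exist
    (ζ : ℂ) (R₁ R₂ R₂' : H →L[ℂ] H)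
    (hm₁ : ∀ f : H, R₁ f ∈ A₁.domain)
    (hr₁ : ∀ f : H, A₁ ⟨R₁ f, hm₁ f⟩ - ζ • R₁ f = f)
    (hr₁' : ∀ u : A₁.domain, R₁ (A₁ u - ζ • (u : H)) = (u : H))
    (hm₂ : ∀ f : H, R₂ f ∈ A₂.domain)
    (hr₂ : ∀ f : H, A₂ ⟨R₂ f, hm₂ f⟩ - ζ • R₂ f = f)
    (hr₂' : ∀ u : A₂.domain, R₂ (A₂ u - ζ • (u : H)) = (u : H))
    (hm₂' : ∀ f : H, R₂' f ∈ A₂.domain)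
    (hr₂c : ∀ f : H, A₂ ⟨R₂' f, hm₂' f⟩ - (starRingEnd ℂ ζ) • R₂' f = f)
    (hr₂c' : ∀ u : A₂.domain, R₂' (A₂ u - (starRingEnd ℂ ζ) • (u : H)) = (u : H))
    -- the bounded trace–resolvent compositions `T R₁(ζ)` and `T R₂(ζ̄)`
    (TR₁ TR₂' : H →L[ℂ] WithLp 2 (𝔥 × 𝔥))
    (hTR₁ : ∀ f : H, TR₁ f = T ⟨R₁ f, hdom₁ (hm₁ f)⟩)
    (hTR₂' : ∀ f : H, TR₂' f = T ⟨R₂' f, hdom₂ (hm₂' f)⟩) :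
    R₂ - R₁ = (ContinuousLinearMap.adjoint TR₂') ∘L (Jsymp 𝔥 ∘L TR₁) :=
  symplectic_krein_formula_general A hdense D hDsub T hGreen A₁ A₂ hA₁ hsa₁ hdom₁ hA₂ hsa₂ hdom₂ ζ
    R₁ R₂ R₂' hm₁ hr₁ hm₂ hr₂ hm₂' hr₂c TR₁ TR₂' hTR₁ hTR₂'
end

section
/- Quasi-periodic monotonicity lemma: let V ∈ L^∞(0,1) be real-valued, λ ∈ ℝ, and ϑ ∈ (0, 2π) with ϑ ≠ π. Suppose u ∈ H²(0,1), u ≢ 0, solves −u'' + V u = λ u on (0,1) and satisfies the quasi-periodic boundary conditions u(1) = e^{iϑ} u(0) and u'(1) = e^{iϑ} u'(0). Then Im(u'(0) · conj(u(0))) ≠ 0. -/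
/-!
If `Im (u'(0) conj u(0)) = 0`, some `c ≠ 0` makes both `c u(0)` and `c u'(0)` real. As `V` and `λ`
are real, `Im (c u)` solves the same equation with zero initial data, so by Grönwall's inequality
`c u` and `c u'` are real on all of `[0, 1]`. The quasi-periodic conditions then say that
multiplication by `e^{iϑ}` keeps the real numbers `c u(0)` and `c u'(0)` real; since `sin ϑ ≠ 0`
both vanish, and uniqueness once more gives `u ≡ 0`.
-/

open MeasureTheory

open Set intervalIntegral Topology

theorem eq_zero_of_le_mul_integral {φ : ℝ → ℝ} {a b K : ℝ} (hφ : ContinuousOn φ (Icc a b))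
    (hφ₀ : ∀ x ∈ Icc a b, 0 ≤ φ x) (h : ∀ x ∈ Icc a b, φ x ≤ K * ∫ t in a..x, φ t) :
    ∀ x ∈ Icc a b, φ x = 0 := by
  intro x hx
  have hab : a ≤ b := hx.1.trans hx.2
  set f : ℝ → ℝ := fun y => ∫ t in a..y, φ t
  have hf : ContinuousOn f (Icc a b) := by
    simpa [uIcc_of_le hab] using
      continuousOn_primitive_interval' (hφ.intervalIntegrable_of_Icc hab) left_mem_uIcc
  have hf' : ∀ y ∈ Ico a b, HasDerivWithinAt f (φ y) (Ici y) y := fun y hy =>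
    have hnhds : Icc a b ∈ 𝓝[>] y := Icc_mem_nhdsGT_of_mem hy
    integral_hasDerivWithinAt_right
      ((hφ.mono (Icc_subset_Icc_right hy.2.le)).intervalIntegrable_of_Icc hy.1)
      ⟨Icc a b, hnhds, hφ.aestronglyMeasurable measurableSet_Icc⟩
      ((hφ y (Ico_subset_Icc_self hy)).mono_of_mem_nhdsWithin hnhds)
  have hf_nonneg : ∀ y ∈ Icc a b, 0 ≤ f y := fun y hy =>
    integral_nonneg hy.1 fun t ht => hφ₀ t ⟨ht.1, ht.2.trans hy.2⟩
  have hf_zero := eq_zero_of_abs_deriv_le_mul_abs_self_of_eq_zero_right hf hf' (by simp [f])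
    fun y hy => by
      rw [Real.norm_of_nonneg (hφ₀ y (Ico_subset_Icc_self hy)),
        Real.norm_of_nonneg (hf_nonneg y (Ico_subset_Icc_self hy))]
      exact h y (Ico_subset_Icc_self hy)
  have hfx : ∫ t in a..x, φ t = 0 := hf_zero x hx
  exact le_antisymm (by simpa [hfx] using h x hx) (hφ₀ x hx)

section W21

variable {E F : Type*} [NormedAddCommGroup E] [NormedSpace ℝ E] [NormedAddCommGroup F]
  [NormedSpace ℝ F]

/-- `u ∈ W^{2,1}(a, b)` with `u'` its continuous derivative on `[a, b]` and `w = u''`, in the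
sense that `u'` is the primitive of the integrable `w`. -/
structure HasW21Derivs (u u' w : ℝ → E) (a b : ℝ) : Prop where
  hasDerivWithinAt : ∀ x ∈ Icc a b, HasDerivWithinAt u (u' x) (Icc a b) x
  deriv_eq_add_integral : ∀ x ∈ Icc a b, u' x = u' a + ∫ t in a..x, w t
  intervalIntegrable : IntervalIntegrable w volume a b

namespace HasW21Derivs

variable {u u' w : ℝ → E} {a b : ℝ}

theorem continuousOn (h : HasW21Derivs u u' w a b) : ContinuousOn u (Icc a b) :=
  fun x hx => (h.hasDerivWithinAt x hx).continuousWithinAt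

theorem continuousOn_deriv (h : HasW21Derivs u u' w a b) : ContinuousOn u' (Icc a b) :=
  ((continuousOn_const.add (continuousOn_primitive_interval' h.intervalIntegrable
    left_mem_uIcc)).mono Icc_subset_uIcc).congr h.deriv_eq_add_integral

theorem eq_add_integral_deriv [CompleteSpace E] (h : HasW21Derivs u u' w a b) {x : ℝ}
    (hx : x ∈ Icc a b) :
    u x = u a + ∫ t in a..x, u' t := by
  have hsub : Icc a x ⊆ Icc a b := Icc_subset_Icc_right hx.2
  rw [integral_eq_sub_of_hasDeriv_right_of_le hx.1 (h.continuousOn.mono hsub)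
    (fun t ht => ((h.hasDerivWithinAt t (hsub (Ioo_subset_Icc_self ht))).hasDerivAt
      (Icc_mem_nhds ht.1 (ht.2.trans_le hx.2))).hasDerivWithinAt)
    ((h.continuousOn_deriv.mono hsub).intervalIntegrable_of_Icc hx.1), add_sub_cancel]

theorem map [CompleteSpace E] [CompleteSpace F] (h : HasW21Derivs u u' w a b) (L : E →L[ℝ] F) :
    HasW21Derivs (fun x => L (u x)) (fun x => L (u' x)) (fun x => L (w x)) a b where
  hasDerivWithinAt x hx := L.hasFDerivAt.comp_hasDerivWithinAt x (h.hasDerivWithinAt x hx)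
  deriv_eq_add_integral x hx := by
    rw [h.deriv_eq_add_integral x hx, map_add, L.intervalIntegral_comp_comm
      (h.intervalIntegrable.mono_set (uIcc_subset_uIcc_left (Icc_subset_uIcc hx)))]
  intervalIntegrable := ⟨L.integrable_comp h.intervalIntegrable.1,
    L.integrable_comp h.intervalIntegrable.2⟩

theorem eq_zero_of_norm_le_mul_norm [CompleteSpace E] {M : ℝ} (h : HasW21Derivs u u' w a b)
    (hw : ∀ᵐ x ∂volume.restrict (Ioo a b), ‖w x‖ ≤ M * ‖u x‖) (hu : u a = 0) (hu' : u' a = 0) :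
    ∀ x ∈ Icc a b, u x = 0 ∧ u' x = 0 := by
  have hw' : ∀ᵐ t, t ∈ Ioc a b → ‖w t‖ ≤ M * ‖u t‖ := by
    rwa [← ae_restrict_iff' measurableSet_Ioc, ← Measure.restrict_congr_set Ioo_ae_eq_Ioc]
  set φ : ℝ → ℝ := fun t => ‖u t‖ + ‖u' t‖
  have hu_cont := h.continuousOn.norm
  have hu'_cont := h.continuousOn_deriv.norm
  have key : ∀ x ∈ Icc a b, φ x ≤ max M 1 * ∫ t in a..x, φ t := by
    intro x hx
    have hsub : Icc a x ⊆ Icc a b := Icc_subset_Icc_right hx.2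
    have hu_int : IntervalIntegrable (fun t => ‖u t‖) volume a x :=
      (hu_cont.mono hsub).intervalIntegrable_of_Icc hx.1
    have hu'_int : IntervalIntegrable (fun t => ‖u' t‖) volume a x :=
      (hu'_cont.mono hsub).intervalIntegrable_of_Icc hx.1
    have hu_le : ‖u x‖ ≤ ∫ t in a..x, ‖u' t‖ := by
      simpa [h.eq_add_integral_deriv hx, hu] using
        (norm_integral_le_integral_norm hx.1 : ‖∫ t in a..x, u' t‖ ≤ _)
    have hu'_le : ‖u' x‖ ≤ ∫ t in a..x, M * ‖u t‖ := by
      rw [h.deriv_eq_add_integral x hx, hu', zero_add]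
      exact norm_integral_le_of_norm_le hx.1
        (hw'.mono fun t ht ht' => ht (Ioc_subset_Ioc_right hx.2 ht')) (hu_int.const_mul M)
    calc φ x ≤ ∫ t in a..x, (‖u' t‖ + M * ‖u t‖) := by
          rw [integral_add hu'_int (hu_int.const_mul M)]; exact add_le_add hu_le hu'_le
      _ ≤ ∫ t in a..x, max M 1 * φ t := by
          refine integral_mono_on hx.1 (hu'_int.add (hu_int.const_mul M))
            ((hu_int.add hu'_int).const_mul _) fun t _ => ?_
          nlinarith [le_max_left M 1, le_max_right M 1, norm_nonneg (u t), norm_nonneg (u' t)]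
      _ = max M 1 * ∫ t in a..x, φ t := integral_const_mul _ _
  have hφ := eq_zero_of_le_mul_integral (φ := φ) (hu_cont.add hu'_cont)
    (fun _ _ => by positivity) key
  intro x hx
  have : ‖u x‖ + ‖u' x‖ = 0 := hφ x hx
  exact ⟨norm_eq_zero.mp (by linarith [norm_nonneg (u x), norm_nonneg (u' x)]),
    norm_eq_zero.mp (by linarith [norm_nonneg (u x), norm_nonneg (u' x)])⟩

theorem map_eq_zero_of_eq_smul [CompleteSpace E] [CompleteSpace F] (h : HasW21Derivs u u' w a b)
    {q : ℝ → ℝ} {M : ℝ} (hq : ∀ᵐ x ∂volume.restrict (Ioo a b), |q x| ≤ M)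
    (hw : ∀ᵐ x ∂volume.restrict (Ioo a b), w x = q x • u x)
    (L : E →L[ℝ] F) (hu : L (u a) = 0) (hu' : L (u' a) = 0) :
    ∀ x ∈ Icc a b, L (u x) = 0 ∧ L (u' x) = 0 := by
  refine (h.map L).eq_zero_of_norm_le_mul_norm (M := M) ?_ hu hu'
  filter_upwards [hq, hw] with x hqx hwx
  rw [hwx, map_smul, norm_smul, Real.norm_eq_abs]
  exact mul_le_mul_of_nonneg_right hqx (norm_nonneg _)

end HasW21Derivs

end W21

theorem exists_ne_zero_im_mul_eq_zero {z w : ℂ} (h : (w * starRingEnd ℂ z).im = 0) :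
    ∃ c ≠ 0, (c * z).im = 0 ∧ (c * w).im = 0 := by
  by_cases hz : z = 0
  · by_cases hw : w = 0
    · exact ⟨1, one_ne_zero, by simp [hz], by simp [hw]⟩
    · exact ⟨starRingEnd ℂ w, (map_ne_zero _).mpr hw, by simp [hz],
        by rw [mul_comm, Complex.mul_conj, Complex.ofReal_im]⟩
  · exact ⟨starRingEnd ℂ z, (map_ne_zero _).mpr hz,
      by rw [mul_comm, Complex.mul_conj, Complex.ofReal_im], by rwa [mul_comm]⟩

theorem Real.sin_ne_zero_of_pos_of_lt_two_pi {ϑ : ℝ} (h₀ : 0 < ϑ) (h₂ : ϑ < 2 * Real.pi)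
    (hπ : ϑ ≠ Real.pi) : Real.sin ϑ ≠ 0 := by
  rw [← neg_ne_zero, ← Real.sin_sub_pi, Ne,
    Real.sin_eq_zero_iff_of_lt_of_lt (by linarith) (by linarith), sub_eq_zero]
  exact hπ

theorem Complex.eq_zero_of_im_eq_zero_of_im_exp_mul_eq_zero {ϑ : ℝ} (hϑ : Real.sin ϑ ≠ 0)
    {z : ℂ} (hz : z.im = 0) (h : (exp (I * ϑ) * z).im = 0) : z = 0 := by
  rw [mul_im, hz, mul_zero, zero_add, mul_comm I, exp_ofReal_mul_I_im] at h
  exact Complex.ext ((mul_eq_zero.mp h).resolve_left hϑ) hz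

theorem quasi_periodic_nonvanishing_wronskian_general
    (V : ℝ → ℝ)
    (hV : MemLp V ⊤ (volume.restrict (Set.Ioo (0:ℝ) 1)))
    (lam ϑ : ℝ) (hϑ₀ : 0 < ϑ) (hϑ₂ : ϑ < 2 * Real.pi) (hϑπ : ϑ ≠ Real.pi)
    (u u' w : ℝ → ℂ)
    -- `u ∈ C¹([0,1])` with derivative `u'`
    (hu : ∀ x ∈ Set.Icc (0:ℝ) 1, HasDerivWithinAt u (u' x) (Set.Icc 0 1) x)
    -- `u' ` is absolutely continuous with derivative `w = u''`
    (hAC : ∀ x ∈ Set.Icc (0:ℝ) 1, u' x = u' 0 + ∫ t in (0:ℝ)..x, w t)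
    (hwint : IntervalIntegrable w volume 0 1)
    -- the equation `−u'' + V u = λ u` a.e. on `(0,1)`
    (hODE : ∀ᵐ x ∂(volume.restrict (Set.Ioo (0:ℝ) 1)),
      -(w x) + (V x : ℂ) * u x = (lam : ℂ) * u x)
    -- `u ≢ 0`
    (hne : ∃ x ∈ Set.Icc (0:ℝ) 1, u x ≠ 0)
    -- quasi-periodic boundary conditions
    (hbc₁ : u 1 = Complex.exp (Complex.I * ϑ) * u 0)
    (hbc₂ : u' 1 = Complex.exp (Complex.I * ϑ) * u' 0) :
    (u' 0 * (starRingEnd ℂ) (u 0)).im ≠ 0 := by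
  intro hW
  have hsol : HasW21Derivs u u' w 0 1 := ⟨hu, hAC, hwint⟩
  have hq : ∀ᵐ x ∂(volume.restrict (Set.Ioo (0:ℝ) 1)),
      |V x - lam| ≤ lpNorm V ⊤ (volume.restrict (Set.Ioo (0:ℝ) 1)) + |lam| := by
    filter_upwards [ae_le_lpNorm_exponent_top hV] with x hx
    exact (abs_sub _ _).trans (add_le_add_left hx _)
  have hw : ∀ᵐ x ∂(volume.restrict (Set.Ioo (0:ℝ) 1)), w x = (V x - lam) • u x := by
    filter_upwards [hODE] with x hx
    rw [Complex.real_smul, Complex.ofReal_sub]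
    linear_combination -hx
  obtain ⟨c, hc, hcu, hcu'⟩ := exists_ne_zero_im_mul_eq_zero hW
  obtain ⟨hcu₁, hcu'₁⟩ := hsol.map_eq_zero_of_eq_smul hq hw
    (Complex.imCLM.comp (ContinuousLinearMap.mul ℝ ℂ c)) hcu hcu' 1 (right_mem_Icc.2 zero_le_one)
  have hsin := Real.sin_ne_zero_of_pos_of_lt_two_pi hϑ₀ hϑ₂ hϑπ
  have hu₀ : u 0 = 0 := (mul_eq_zero.mp (Complex.eq_zero_of_im_eq_zero_of_im_exp_mul_eq_zero
    hsin hcu (by rwa [mul_left_comm, ← hbc₁]))).resolve_left hc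
  have hu'₀ : u' 0 = 0 := (mul_eq_zero.mp (Complex.eq_zero_of_im_eq_zero_of_im_exp_mul_eq_zero
    hsin hcu' (by rwa [mul_left_comm, ← hbc₂]))).resolve_left hc
  obtain ⟨x, hx, hux⟩ := hne
  exact hux (hsol.map_eq_zero_of_eq_smul hq hw (ContinuousLinearMap.id ℝ ℂ) hu₀ hu'₀ x hx).1

/-- **quasi-periodic monotonicity lemma.** Let `V ∈ L^∞(0,1)` be
real-valued, `λ ∈ ℝ`, and `ϑ ∈ (0, 2π)` with `ϑ ≠ π`.  Suppose `u ∈ H²(0,1)`, `u ≢ 0`,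
solves `−u'' + V u = λ u` on `(0,1)` (here `u'` is the continuous representative of the
derivative, absolutely continuous with derivative `w = u'' ∈ L²(0,1)`) and satisfies the
quasi-periodic boundary conditions `u(1) = e^{iϑ} u(0)` and `u'(1) = e^{iϑ} u'(0)`.
Then `Im (u'(0) ⋅ conj (u(0))) ≠ 0`. -/
theorem quasi_periodic_nonvanishing_wronskian
    (V : ℝ → ℝ)
    (hV : MemLp V ⊤ (volume.restrict (Set.Ioo (0:ℝ) 1)))
    (lam ϑ : ℝ) (hϑ₀ : 0 < ϑ) (hϑ₂ : ϑ < 2 * Real.pi) (hϑπ : ϑ ≠ Real.pi)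
    (u u' w : ℝ → ℂ)
    -- `u ∈ C¹([0,1])` with derivative `u'`
    (hu : ∀ x ∈ Set.Icc (0:ℝ) 1, HasDerivWithinAt u (u' x) (Set.Icc 0 1) x)
    -- `u' ` is absolutely continuous with derivative `w = u''`
    (hAC : ∀ x ∈ Set.Icc (0:ℝ) 1, u' x = u' 0 + ∫ t in (0:ℝ)..x, w t)
    -- `u'' ∈ L²(0,1)`
    (hw2 : MemLp w 2 (volume.restrict (Set.Ioo (0:ℝ) 1)))
    (hwint : IntervalIntegrable w volume 0 1)
    -- the equation `−u'' + V u = λ u` a.e. on `(0,1)`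
    (hODE : ∀ᵐ x ∂(volume.restrict (Set.Ioo (0:ℝ) 1)),
      -(w x) + (V x : ℂ) * u x = (lam : ℂ) * u x)
    -- `u ≢ 0`
    (hne : ∃ x ∈ Set.Icc (0:ℝ) 1, u x ≠ 0)
    -- quasi-periodic boundary conditions
    (hbc₁ : u 1 = Complex.exp (Complex.I * ϑ) * u 0)
    (hbc₂ : u' 1 = Complex.exp (Complex.I * ϑ) * u' 0) :
    (u' 0 * (starRingEnd ℂ) (u 0)).im ≠ 0 :=
  quasi_periodic_nonvanishing_wronskian_general V hV lam ϑ hϑ₀ hϑ₂ hϑπ u u' w hu hAC hwint hODE hne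
    hbc₁ hbc₂
end
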